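/- arXiv:1306.2712 — 6 statements merged into one kernel-verified Lean document; each statement's English description precedes it below -/
import Mathlib

section
/- For any ensemble of mutually orthogonal pure states S = {(p_i, |ψ_i⟩)} and any POVM M, the optimal probability of correctly identifying the state using measurement M equals the achievable fidelity of M: P_s(M) = F(M) = Σ_a max_i { p_i ⟨ψ_i|M_a|ψ_i⟩ }. -/
/-!
Both optimisations decouple over the outcomes `a`. Write `fₐᵢ = pᵢ⟨ψᵢ|Mₐ|ψᵢ⟩ ≥ 0`. A decoding
function gains `f_{a, G a}` at outcome `a`, maximised by an argmax. A guessing strategy gains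
`∑ᵢ fₐᵢ |⟨ψᵢ|φₐ⟩|²`, which by Bessel's inequality is at most `maxᵢ fₐᵢ` for a unit vector `φₐ`,
with equality at `φₐ = ψ_{G a}` by orthonormality.
-/

open Finset Matrix WithLp
open scoped InnerProductSpace ComplexOrder

theorem isGreatest_sum_sup' {α ι β : Type*} [Fintype α] [Fintype ι] [AddCommMonoid β]
    [LinearOrder β] [IsOrderedAddMonoid β] (H : (univ : Finset ι).Nonempty) (f : α → ι → β) :
    IsGreatest {x | ∃ G : α → ι, x = ∑ a, f a (G a)} (∑ a, univ.sup' H (f a)) := by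
  refine ⟨?_, ?_⟩
  · choose G _ hG using fun a => exists_mem_eq_sup' H (f a)
    exact ⟨G, sum_congr rfl fun a _ => hG a⟩
  · rintro x ⟨G, rfl⟩
    exact sum_le_sum fun a _ => le_sup' (f a) (mem_univ (G a))

namespace Orthonormal

variable {𝕜 E ι : Type*} [RCLike 𝕜] [NormedAddCommGroup E] [InnerProductSpace 𝕜 E]
  {v : ι → E}

theorem sum_mul_norm_inner_sq_le (hv : Orthonormal 𝕜 v) (s : Finset ι) {w : ι → ℝ} {c : ℝ}
    (hc : 0 ≤ c) (hw : ∀ i ∈ s, w i ≤ c) (x : E) :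
    ∑ i ∈ s, w i * ‖⟪v i, x⟫_𝕜‖ ^ 2 ≤ c * ‖x‖ ^ 2 :=
  calc ∑ i ∈ s, w i * ‖⟪v i, x⟫_𝕜‖ ^ 2
      ≤ ∑ i ∈ s, c * ‖⟪v i, x⟫_𝕜‖ ^ 2 :=
        sum_le_sum fun i hi => mul_le_mul_of_nonneg_right (hw i hi) (by positivity)
    _ = c * ∑ i ∈ s, ‖⟪v i, x⟫_𝕜‖ ^ 2 := (mul_sum _ _ _).symm
    _ ≤ c * ‖x‖ ^ 2 := mul_le_mul_of_nonneg_left (hv.sum_inner_products_le x) hc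

theorem sum_mul_norm_inner_sq_self [Fintype ι] (hv : Orthonormal 𝕜 v) (w : ι → ℝ) (j : ι) :
    ∑ i, w i * ‖⟪v i, v j⟫_𝕜‖ ^ 2 = w j := by
  classical
  simp [orthonormal_iff_ite.mp hv, apply_ite (fun z : 𝕜 => ‖z‖ ^ 2)]

theorem isGreatest_sum_mul_norm_inner_sq {α : Type*} [Fintype α] [Fintype ι]
    (hv : Orthonormal 𝕜 v) (H : (univ : Finset ι).Nonempty) (f : α → ι → ℝ)
    (hf : ∀ a i, 0 ≤ f a i) :
    IsGreatest {x | ∃ φ : α → E, (∀ a, ‖φ a‖ = 1) ∧ x = ∑ a, ∑ i, f a i * ‖⟪v i, φ a⟫_𝕜‖ ^ 2}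
      (∑ a, univ.sup' H (f a)) := by
  refine ⟨?_, ?_⟩
  · obtain ⟨G, hG⟩ := (isGreatest_sum_sup' H f).1
    refine ⟨fun a => v (G a), fun a => hv.1 (G a), ?_⟩
    simp only [hG, hv.sum_mul_norm_inner_sq_self]
  · rintro x ⟨φ, hφ, rfl⟩
    refine sum_le_sum fun a _ => ?_
    have hmax : 0 ≤ univ.sup' H (f a) :=
      (hf a H.choose).trans (le_sup' (f a) (mem_univ _))
    simpa [hφ a] using
      hv.sum_mul_norm_inner_sq_le univ hmax (fun i _ => le_sup' (f a) (mem_univ i)) (φ a)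

end Orthonormal

namespace EuclideanSpace

variable {𝕜 ι : Type*} [RCLike 𝕜] [Fintype ι]

theorem orthonormal_toLp_iff {κ : Type*} [DecidableEq κ] {ψ : κ → ι → 𝕜} :
    Orthonormal 𝕜 (fun i => toLp 2 (ψ i)) ↔
      ∀ i j, star (ψ i) ⬝ᵥ ψ j = if i = j then 1 else 0 := by
  simp only [orthonormal_iff_ite, inner_toLp_toLp, dotProduct_comm (ψ _)]

theorem norm_toLp_eq_one_iff (u : ι → 𝕜) : ‖toLp 2 u‖ = 1 ↔ star u ⬝ᵥ u = 1 := by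
  rw [← dotProduct_comm, ← inner_toLp_toLp, inner_self_eq_norm_sq_to_K]
  norm_cast
  exact (pow_eq_one_iff_of_nonneg (norm_nonneg _) two_ne_zero).symm

theorem norm_inner_eq_norm_star_dotProduct (x y : EuclideanSpace 𝕜 ι) :
    ‖⟪x, y⟫_𝕜‖ = ‖star (ofLp x) ⬝ᵥ ofLp y‖ := by
  rw [inner_eq_star_dotProduct, dotProduct_comm]

end EuclideanSpace

theorem stmt1_general (d N A : ℕ) (hN : 0 < N)
    (ψ : Fin N → (Fin d → ℂ))
    (hortho : ∀ i j, star (ψ i) ⬝ᵥ ψ j = if i = j then 1 else 0)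
    (p : Fin N → ℝ) (hp : ∀ i, 0 ≤ p i)
    (M : Fin A → Matrix (Fin d) (Fin d) ℂ)
    (hpsd : ∀ a, (M a).PosSemidef) :
    IsGreatest {x : ℝ | ∃ G : Fin A → Fin N,
        x = ∑ a, p (G a) * (star (ψ (G a)) ⬝ᵥ (M a).mulVec (ψ (G a))).re}
      (∑ a, (Finset.univ.sup' (Finset.univ_nonempty_iff.mpr ⟨⟨0, hN⟩⟩)
        fun i => p i * (star (ψ i) ⬝ᵥ (M a).mulVec (ψ i)).re)) ∧
    IsGreatest {x : ℝ | ∃ φ : Fin A → (Fin d → ℂ), (∀ a, star (φ a) ⬝ᵥ φ a = 1) ∧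
        x = ∑ a, ∑ i, p i * (star (ψ i) ⬝ᵥ (M a).mulVec (ψ i)).re *
          ‖star (ψ i) ⬝ᵥ φ a‖^2}
      (∑ a, (Finset.univ.sup' (Finset.univ_nonempty_iff.mpr ⟨⟨0, hN⟩⟩)
        fun i => p i * (star (ψ i) ⬝ᵥ (M a).mulVec (ψ i)).re)) := by
  have hf : ∀ a i, 0 ≤ p i * (star (ψ i) ⬝ᵥ (M a).mulVec (ψ i)).re := fun a i =>
    mul_nonneg (hp i) ((hpsd a).re_dotProduct_nonneg (ψ i))
  refine ⟨isGreatest_sum_sup' _ _, ?_⟩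
  convert (EuclideanSpace.orthonormal_toLp_iff.mpr hortho).isGreatest_sum_mul_norm_inner_sq
    ⟨⟨0, hN⟩, mem_univ _⟩ _ hf using 1
  ext x
  simp only [Set.mem_ofPred_eq, EuclideanSpace.norm_inner_eq_norm_star_dotProduct]
  constructor
  · rintro ⟨φ, hφ, rfl⟩
    exact ⟨fun a => toLp 2 (φ a),
      fun a => (EuclideanSpace.norm_toLp_eq_one_iff _).mpr (hφ a), rfl⟩
  · rintro ⟨φ, hφ, rfl⟩
    exact ⟨fun a => ofLp (φ a),
      fun a => (EuclideanSpace.norm_toLp_eq_one_iff _).mp (hφ a), rfl⟩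

/-- Theorem 1 (first part): for an ensemble of mutually orthogonal pure states and any
POVM `M`, the optimal success probability over decoding functions and the achievable
fidelity over guessing strategies are both equal to `∑ₐ maxᵢ pᵢ⟨ψᵢ|Mₐ|ψᵢ⟩`. -/
theorem stmt1 (d N A : ℕ) (hN : 0 < N)
    (ψ : Fin N → (Fin d → ℂ))
    (hortho : ∀ i j, star (ψ i) ⬝ᵥ ψ j = if i = j then 1 else 0)
    (p : Fin N → ℝ) (hp : ∀ i, 0 ≤ p i) (hpsum : ∑ i, p i = 1)
    (M : Fin A → Matrix (Fin d) (Fin d) ℂ)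
    (hpsd : ∀ a, (M a).PosSemidef) (hsum : ∑ a, M a = 1) :
    IsGreatest {x : ℝ | ∃ G : Fin A → Fin N,
        x = ∑ a, p (G a) * (star (ψ (G a)) ⬝ᵥ (M a).mulVec (ψ (G a))).re}
      (∑ a, (Finset.univ.sup' (Finset.univ_nonempty_iff.mpr ⟨⟨0, hN⟩⟩)
        fun i => p i * (star (ψ i) ⬝ᵥ (M a).mulVec (ψ i)).re)) ∧
    IsGreatest {x : ℝ | ∃ φ : Fin A → (Fin d → ℂ), (∀ a, star (φ a) ⬝ᵥ φ a = 1) ∧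
        x = ∑ a, ∑ i, p i * (star (ψ i) ⬝ᵥ (M a).mulVec (ψ i)).re *
          ‖star (ψ i) ⬝ᵥ φ a‖^2}
      (∑ a, (Finset.univ.sup' (Finset.univ_nonempty_iff.mpr ⟨⟨0, hN⟩⟩)
        fun i => p i * (star (ψ i) ⬝ᵥ (M a).mulVec (ψ i)).re)) :=
  stmt1_general d N A hN ψ hortho p hp M hpsd
end

section
/- Let |ψ⟩ ∈ ℂ^{d₁} ⊗ ℂ^{d₂} be a unit vector with largest Schmidt coefficient √λ₁. If T is an operator with 0 ≤ T ≤ I whose partial transpose is positive semidefinite, then ⟨ψ|T|ψ⟩ ≤ λ₁ · Tr(T). -/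
open Matrix
open scoped BigOperators ComplexOrder

noncomputable section

/-- Partial transpose on the second tensor factor: `(A ⊗ B) ↦ A ⊗ Bᵀ`. -/
def ptrans {d₁ d₂ : ℕ} (T : Matrix (Fin d₁ × Fin d₂) (Fin d₁ × Fin d₂) ℂ) :
    Matrix (Fin d₁ × Fin d₂) (Fin d₁ × Fin d₂) ℂ :=
  fun x y => T (x.1, y.2) (y.1, x.2)

/-- Reduced density matrix of `|ψ⟩⟨ψ|` on the first factor (partial trace over the second). -/
def red₁ {d₁ d₂ : ℕ} (ψ : Fin d₁ × Fin d₂ → ℂ) : Matrix (Fin d₁) (Fin d₁) ℂ :=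
  fun i i' => ∑ j, ψ (i, j) * star (ψ (i', j))

/-! With `Ψ` the reshaping of `ψ` into a `d₁ × d₂` matrix, `red₁ ψ = Ψ Ψᴴ`, so `λ₁ = ‖Ψᴴ‖² = ‖Ψ‖²`
in operator norm. Writing `V` for the reshaping of a vector `v` and `B = Ψ Vᵀ`, the quadratic form
of `σ = ptrans |ψ⟩⟨ψ|` at `v` is `∑ B_ab conj B_ba ≤ ∑ |B_ab|² ≤ ‖Ψ‖² ‖v‖²`, so `σ ≤ λ₁ I`.
The partial transpose `Tᴳ := ptrans T` preserves traces and traces of products, hence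
`⟨ψ|T|ψ⟩ = Tr (Tᴳ σ) ≤ λ₁ Tr Tᴳ = λ₁ Tr T`, the inequality being `Tr (Tᴳ (λ₁ I - σ)) ≥ 0` for the
two positive semidefinite matrices `Tᴳ` and `λ₁ I - σ`. -/

namespace Matrix
variable {𝕜 m n : Type*} [RCLike 𝕜] [Fintype m] [Fintype n]

lemma PosSemidef.trace_mul_nonneg {A B : Matrix n n 𝕜} (hA : A.PosSemidef)
    (hB : B.PosSemidef) : 0 ≤ (A * B).trace := by
  classical
  open scoped MatrixOrder Matrix.Norms.L2Operator in
  obtain ⟨X, rfl⟩ := CStarAlgebra.nonneg_iff_eq_star_mul_self.mp hA.nonneg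
  rw [star_eq_conjTranspose, Matrix.mul_assoc, trace_mul_comm]
  exact (hB.mul_mul_conjTranspose_same X).trace_nonneg

lemma star_dotProduct_mulVec_eq_trace_mul_vecMulVec (T : Matrix n n 𝕜) (x : n → 𝕜) :
    star x ⬝ᵥ T *ᵥ x = (T * vecMulVec x (star x)).trace := by
  rw [mul_vecMulVec, trace_vecMulVec, dotProduct_comm]

lemma re_sum_mul_star_swap_le (B : Matrix m m 𝕜) :
    RCLike.re (∑ a, ∑ b, B a b * star (B b a)) ≤ ∑ a, ∑ b, ‖B a b‖ ^ 2 := by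
  have hterm : ∀ a b, RCLike.re (B a b * star (B b a)) ≤ (‖B a b‖ ^ 2 + ‖B b a‖ ^ 2) / 2 :=
    fun a b => by
      have := (RCLike.re_le_norm (B a b * star (B b a))).trans_eq
        (by rw [norm_mul, norm_star])
      nlinarith [sq_nonneg (‖B a b‖ - ‖B b a‖)]
  have hswap : ∑ a, ∑ b, ‖B b a‖ ^ 2 = ∑ a, ∑ b, ‖B a b‖ ^ 2 := Finset.sum_comm
  calc RCLike.re (∑ a, ∑ b, B a b * star (B b a))
      = ∑ a, ∑ b, RCLike.re (B a b * star (B b a)) := by simp only [map_sum]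
    _ ≤ ∑ a, ∑ b, (‖B a b‖ ^ 2 + ‖B b a‖ ^ 2) / 2 :=
        Finset.sum_le_sum fun a _ => Finset.sum_le_sum fun b _ => hterm a b
    _ = ∑ a, ∑ b, ‖B a b‖ ^ 2 := by
        simp only [← Finset.sum_div, Finset.sum_add_distrib, hswap]; ring

lemma re_star_dotProduct_self (x : n → 𝕜) :
    RCLike.re (star x ⬝ᵥ x) = ‖WithLp.toLp 2 x‖ ^ 2 := by
  rw [← inner_self_eq_norm_sq (𝕜 := 𝕜), EuclideanSpace.inner_eq_star_dotProduct, dotProduct_comm]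

lemma star_dotProduct_self_eq_one_of_norm_eq_one {x : EuclideanSpace 𝕜 n} (hx : ‖x‖ = 1) :
    star x.ofLp ⬝ᵥ x.ofLp = 1 := by
  rw [dotProduct_comm, ← EuclideanSpace.inner_eq_star_dotProduct, inner_self_eq_norm_sq_to_K, hx]
  simp

lemma star_dotProduct_mul_conjTranspose_mulVec (A : Matrix m n 𝕜) (u : m → 𝕜) :
    star u ⬝ᵥ (A * Aᴴ) *ᵥ u = star (Aᴴ *ᵥ u) ⬝ᵥ Aᴴ *ᵥ u := by
  rw [← mulVec_mulVec, dotProduct_mulVec, star_mulVec, conjTranspose_conjTranspose]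

open scoped Matrix.Norms.L2Operator in
lemma l2_opNorm_conjTranspose_le_sqrt [DecidableEq m] {A : Matrix m n 𝕜} {c : ℝ}
    (h : ∀ u : m → 𝕜, star u ⬝ᵥ u = 1 → RCLike.re (star u ⬝ᵥ (A * Aᴴ) *ᵥ u) ≤ c) :
    ‖Aᴴ‖ ≤ √c := by
  refine ContinuousLinearMap.opNorm_le_of_unit_norm (Real.sqrt_nonneg c) fun x hx => ?_
  refine Real.le_sqrt_of_sq_le ?_
  have := h x.ofLp (star_dotProduct_self_eq_one_of_norm_eq_one hx)
  rwa [star_dotProduct_mul_conjTranspose_mulVec, re_star_dotProduct_self] at this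

open scoped Matrix.Norms.L2Operator in
lemma norm_mulVec_sq_le_of_rayleigh_le {A : Matrix m n 𝕜} {c : ℝ} (hc : 0 ≤ c)
    (h : ∀ u : m → 𝕜, star u ⬝ᵥ u = 1 → RCLike.re (star u ⬝ᵥ (A * Aᴴ) *ᵥ u) ≤ c)
    (w : n → 𝕜) : ‖WithLp.toLp 2 (A *ᵥ w)‖ ^ 2 ≤ c * ‖WithLp.toLp 2 w‖ ^ 2 := by
  classical
  have hA : ‖A‖ ≤ √c := l2_opNorm_conjTranspose A ▸ l2_opNorm_conjTranspose_le_sqrt h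
  calc ‖WithLp.toLp 2 (A *ᵥ w)‖ ^ 2 ≤ (‖A‖ * ‖WithLp.toLp 2 w‖) ^ 2 := by
        gcongr; exact l2_opNorm_mulVec A (WithLp.toLp 2 w)
    _ ≤ (√c * ‖WithLp.toLp 2 w‖) ^ 2 := by gcongr
    _ = c * ‖WithLp.toLp 2 w‖ ^ 2 := by rw [mul_pow, Real.sq_sqrt hc]

end Matrix

section PartialTranspose
variable {d₁ d₂ : ℕ}

lemma trace_ptrans (T : Matrix (Fin d₁ × Fin d₂) (Fin d₁ × Fin d₂) ℂ) :
    (ptrans T).trace = T.trace := rfl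

lemma trace_ptrans_mul_ptrans (A B : Matrix (Fin d₁ × Fin d₂) (Fin d₁ × Fin d₂) ℂ) :
    (ptrans A * ptrans B).trace = (A * B).trace := by
  simp only [trace, diag, mul_apply, ptrans]
  rw [← Fintype.sum_prod_type', ← Fintype.sum_prod_type']
  let swap : (Fin d₁ × Fin d₂) × (Fin d₁ × Fin d₂) ≃ (Fin d₁ × Fin d₂) × (Fin d₁ × Fin d₂) :=
    { toFun := fun p => ((p.1.1, p.2.2), (p.2.1, p.1.2))
      invFun := fun p => ((p.1.1, p.2.2), (p.2.1, p.1.2))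
      left_inv := fun _ => rfl
      right_inv := fun _ => rfl }
  exact Fintype.sum_equiv swap _ _ fun _ => rfl

lemma Matrix.IsHermitian.ptrans {A : Matrix (Fin d₁ × Fin d₂) (Fin d₁ × Fin d₂) ℂ}
    (hA : A.IsHermitian) : (ptrans A).IsHermitian :=
  IsHermitian.ext fun x y => hA.apply (x.1, y.2) (y.1, x.2)

lemma red₁_eq_mul_conjTranspose (ψ : Fin d₁ × Fin d₂ → ℂ) :
    red₁ ψ = of (Function.curry ψ) * (of (Function.curry ψ))ᴴ := rfl

lemma star_dotProduct_ptrans_vecMulVec_mulVec (ψ v : Fin d₁ × Fin d₂ → ℂ) :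
    star v ⬝ᵥ ptrans (vecMulVec ψ (star ψ)) *ᵥ v =
      ∑ a, ∑ b, (of (Function.curry ψ) *ᵥ Function.curry v b) a *
        star ((of (Function.curry ψ) *ᵥ Function.curry v a) b) := by
  simp only [dotProduct, mulVec, ptrans, vecMulVec_apply, of_apply, Function.curry_apply,
    Pi.star_apply, star_sum, star_mul', Fintype.sum_prod_type, Finset.mul_sum, Finset.sum_mul]
  refine Finset.sum_congr rfl fun a _ => ?_
  rw [Finset.sum_comm]
  exact Finset.sum_congr rfl fun b _ => Finset.sum_congr rfl fun j _ =>
    Finset.sum_congr rfl fun k _ => by ring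

lemma norm_toLp_sq_eq_sum_curry (v : Fin d₁ × Fin d₂ → ℂ) :
    ‖WithLp.toLp 2 v‖ ^ 2 = ∑ a, ‖WithLp.toLp 2 (Function.curry v a)‖ ^ 2 := by
  simp only [EuclideanSpace.norm_sq_eq, Fintype.sum_prod_type]
  rfl

lemma posSemidef_smul_one_sub_ptrans_vecMulVec (ψ : Fin d₁ × Fin d₂ → ℂ) {c : ℝ}
    (h : ∀ w : Fin d₂ → ℂ,
      ‖WithLp.toLp 2 (of (Function.curry ψ) *ᵥ w)‖ ^ 2 ≤ c * ‖WithLp.toLp 2 w‖ ^ 2) :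
    (c • 1 - ptrans (vecMulVec ψ (star ψ))).PosSemidef := by
  have herm : (c • 1 - ptrans (vecMulVec ψ (star ψ))).IsHermitian :=
    (isHermitian_one.smul (IsSelfAdjoint.all c)).sub
      (posSemidef_vecMulVec_self_star ψ).isHermitian.ptrans
  refine .of_dotProduct_mulVec_nonneg herm fun v => RCLike.nonneg_iff.mpr
    ⟨?_, herm.im_star_dotProduct_mulVec_self v⟩
  have hquad : RCLike.re (star v ⬝ᵥ ptrans (vecMulVec ψ (star ψ)) *ᵥ v) ≤
      c * ‖WithLp.toLp 2 v‖ ^ 2 := by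
    rw [star_dotProduct_ptrans_vecMulVec_mulVec, norm_toLp_sq_eq_sum_curry, Finset.mul_sum]
    refine (re_sum_mul_star_swap_le _).trans ?_
    rw [Finset.sum_comm]
    refine Finset.sum_le_sum fun b _ => ?_
    simpa only [EuclideanSpace.norm_sq_eq] using h (Function.curry v b)
  rw [sub_mulVec, dotProduct_sub, smul_mulVec, one_mulVec, dotProduct_smul, map_sub,
    RCLike.smul_re, re_star_dotProduct_self]
  linarith

end PartialTranspose

theorem stmt4_general (d₁ d₂ : ℕ) (ψ : Fin d₁ × Fin d₂ → ℂ)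
    (lam₁ : ℝ)
    (hlam : IsGreatest {x : ℝ | ∃ v : Fin d₁ → ℂ, star v ⬝ᵥ v = 1 ∧
        x = (star v ⬝ᵥ (red₁ ψ).mulVec v).re} lam₁)
    (T : Matrix (Fin d₁ × Fin d₂) (Fin d₁ × Fin d₂) ℂ)
    (hPT : (ptrans T).PosSemidef) :
    (star ψ ⬝ᵥ T.mulVec ψ).re ≤ lam₁ * T.trace.re := by
  rw [red₁_eq_mul_conjTranspose] at hlam
  have hlam₀ : 0 ≤ lam₁ := by
    obtain ⟨v, -, rfl⟩ := hlam.1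
    exact (posSemidef_self_mul_conjTranspose _).re_dotProduct_nonneg v
  have hbound := norm_mulVec_sq_le_of_rayleigh_le hlam₀ fun u hu => hlam.2 ⟨u, hu, rfl⟩
  have hgap := hPT.trace_mul_nonneg (posSemidef_smul_one_sub_ptrans_vecMulVec ψ hbound)
  rw [Matrix.mul_sub, trace_sub, Matrix.mul_smul, Matrix.mul_one, trace_smul, trace_ptrans,
    trace_ptrans_mul_ptrans, ← star_dotProduct_mulVec_eq_trace_mul_vecMulVec] at hgap
  have hgap_re := (RCLike.nonneg_iff.mp hgap).1
  rw [map_sub, RCLike.smul_re, RCLike.re_to_complex, RCLike.re_to_complex] at hgap_re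
  linarith

/-- Lemma 2 (first part): if `λ₁` is the largest eigenvalue of the reduced density
matrix of a bipartite unit vector `|ψ⟩` (characterized as the maximal Rayleigh
quotient), and `T` is a measurement operator `0 ≤ T ≤ I` with positive partial
transpose, then `⟨ψ|T|ψ⟩ ≤ λ₁ Tr T`. -/
theorem stmt4 (d₁ d₂ : ℕ) (ψ : Fin d₁ × Fin d₂ → ℂ) (hψ : star ψ ⬝ᵥ ψ = 1)
    (lam₁ : ℝ)
    (hlam : IsGreatest {x : ℝ | ∃ v : Fin d₁ → ℂ, star v ⬝ᵥ v = 1 ∧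
        x = (star v ⬝ᵥ (red₁ ψ).mulVec v).re} lam₁)
    (T : Matrix (Fin d₁ × Fin d₂) (Fin d₁ × Fin d₂) ℂ)
    (hT : T.PosSemidef) (hTI : (1 - T).PosSemidef)
    (hPT : (ptrans T).PosSemidef) :
    (star ψ ⬝ᵥ T.mulVec ψ).re ≤ lam₁ * T.trace.re :=
  stmt4_general d₁ d₂ ψ lam₁ hlam T hPT
end
end

section
/- Let S = {(p_i, |ψ_i⟩)} be an ensemble of pure states in ℂ^{d₁} ⊗ ℂ^{d₂} with d₁ ≤ d₂, and let λ_i be the square of the largest Schmidt coefficient of |ψ_i⟩. Then the separable fidelity satisfies F_S ≤ d₁·d₂·‖Λ‖_∞, where Λ = Σ_i p_i λ_i |ψ_i⟩⟨ψ_i| and ‖·‖_∞ is the operator norm. -/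
/-!
A product vector `χ` overlaps each `ψᵢ` by at most `|⟨ψᵢ|χ⟩|² ≤ λᵢ ‖χ‖²`, so outcome `a` of a
separable measurement contributes at most `mₐ ‖χₐ‖² ⟨φₐ|Λ|φₐ⟩ ≤ mₐ ‖χₐ‖² ‖Λ‖∞`. Taking the
trace of the completeness relation `∑ₐ mₐ |χₐ⟩⟨χₐ| = I` shows that the weights `mₐ ‖χₐ‖²` add
up to `d₁ d₂`.
-/

open Matrix
open scoped BigOperators ComplexOrder

noncomputable section

/-- Product vector `|a⟩⊗|b⟩` in `ℂ^{d₁} ⊗ ℂ^{d₂}`. -/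
def prodv {d₁ d₂ : ℕ} (a : Fin d₁ → ℂ) (b : Fin d₂ → ℂ) : Fin d₁ × Fin d₂ → ℂ :=
  fun y => a y.1 * b y.2

/-- The set of average fidelities achievable by (rank-one) separable measurements
together with guessing strategies, for the ensemble `{(pᵢ, ψᵢ)}`. Its supremum is the
separable fidelity `F_S`. -/
def sepFidSet {d₁ d₂ : ℕ} (N : ℕ) (p : Fin N → ℝ)
    (ψ : Fin N → (Fin d₁ × Fin d₂ → ℂ)) : Set ℝ :=
  {x : ℝ | ∃ (A : ℕ) (m : Fin A → ℝ) (χ₁ : Fin A → Fin d₁ → ℂ)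
      (χ₂ : Fin A → Fin d₂ → ℂ) (φ : Fin A → (Fin d₁ × Fin d₂ → ℂ)),
    (∀ a, 0 < m a) ∧ (∀ a, star (φ a) ⬝ᵥ φ a = 1) ∧
    (∑ a, (m a : ℂ) • Matrix.vecMulVec (prodv (χ₁ a) (χ₂ a))
        (star (prodv (χ₁ a) (χ₂ a))) = 1) ∧
    x = ∑ a, ∑ i, p i * m a *
          (‖star (ψ i) ⬝ᵥ prodv (χ₁ a) (χ₂ a)‖)^2 *
          (‖star (ψ i) ⬝ᵥ φ a‖)^2}

section l2NormSq

variable {n : Type*} [Fintype n]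

def l2NormSq (v : n → ℂ) : ℝ := ∑ j, Complex.normSq (v j)

lemma l2NormSq_nonneg (v : n → ℂ) : 0 ≤ l2NormSq v :=
  Finset.sum_nonneg fun j _ => Complex.normSq_nonneg (v j)

lemma star_dotProduct_self_eq_l2NormSq (v : n → ℂ) : star v ⬝ᵥ v = (l2NormSq v : ℂ) := by
  simp [l2NormSq, dotProduct, Complex.normSq_eq_conj_mul_self]

lemma l2NormSq_ne_zero {v : n → ℂ} (hv : v ≠ 0) : l2NormSq v ≠ 0 := by
  rw [← Complex.ofReal_ne_zero, ← star_dotProduct_self_eq_l2NormSq]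
  exact dotProduct_star_self_eq_zero.not.mpr hv

lemma l2NormSq_real_smul (r : ℝ) (v : n → ℂ) : l2NormSq ((r : ℂ) • v) = r ^ 2 * l2NormSq v := by
  simp [l2NormSq, Complex.normSq_mul, Finset.mul_sum, sq]

lemma exists_sq_mul_l2NormSq_eq_one {v : n → ℂ} (hv : v ≠ 0) :
    ∃ r : ℝ, r ^ 2 * l2NormSq v = 1 ∧ star ((r : ℂ) • v) ⬝ᵥ ((r : ℂ) • v) = 1 := by
  have hr : (Real.sqrt (l2NormSq v))⁻¹ ^ 2 * l2NormSq v = 1 := by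
    rw [inv_pow, Real.sq_sqrt (l2NormSq_nonneg v), inv_mul_cancel₀ (l2NormSq_ne_zero hv)]
  refine ⟨_, hr, ?_⟩
  rw [star_dotProduct_self_eq_l2NormSq, l2NormSq_real_smul, hr, Complex.ofReal_one]

end l2NormSq

lemma prodv_smul_smul {d₁ d₂ : ℕ} (c c' : ℂ) (a : Fin d₁ → ℂ) (b : Fin d₂ → ℂ) :
    prodv (c • a) (c' • b) = (c * c') • prodv a b := by
  funext y
  simp only [prodv, Pi.smul_apply, smul_eq_mul]
  ring

lemma l2NormSq_prodv {d₁ d₂ : ℕ} (a : Fin d₁ → ℂ) (b : Fin d₂ → ℂ) :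
    l2NormSq (prodv a b) = l2NormSq a * l2NormSq b := by
  simp [l2NormSq, prodv, Fintype.sum_prod_type, Finset.sum_mul_sum, Complex.normSq_mul]

/-- The squared overlap with a product vector scales like the squared norm of each factor,
so the bound on unit product vectors extends to all of them. -/
lemma sq_norm_dotProduct_prodv_le {d₁ d₂ : ℕ} {ψ : Fin d₁ × Fin d₂ → ℂ} {lam : ℝ}
    (hlam : lam ∈ upperBounds {x : ℝ | ∃ (a : Fin d₁ → ℂ) (b : Fin d₂ → ℂ),
        star a ⬝ᵥ a = 1 ∧ star b ⬝ᵥ b = 1 ∧ x = (‖star ψ ⬝ᵥ prodv a b‖)^2})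
    (a : Fin d₁ → ℂ) (b : Fin d₂ → ℂ) :
    ‖star ψ ⬝ᵥ prodv a b‖ ^ 2 ≤ lam * l2NormSq (prodv a b) := by
  rcases eq_or_ne a 0 with rfl | ha
  · simp [prodv, l2NormSq, dotProduct]
  rcases eq_or_ne b 0 with rfl | hb
  · simp [prodv, l2NormSq, dotProduct]
  obtain ⟨r, hra, hua⟩ := exists_sq_mul_l2NormSq_eq_one ha
  obtain ⟨s, hsb, hub⟩ := exists_sq_mul_l2NormSq_eq_one hb
  have hunit : (r * s) ^ 2 * ‖star ψ ⬝ᵥ prodv a b‖ ^ 2 ≤ lam := by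
    have := hlam ⟨_, _, hua, hub, rfl⟩
    rwa [prodv_smul_smul, dotProduct_smul, smul_eq_mul, norm_mul, mul_pow, ← Complex.ofReal_mul,
      Complex.norm_real, Real.norm_eq_abs, sq_abs] at this
  calc ‖star ψ ⬝ᵥ prodv a b‖ ^ 2
      = (r ^ 2 * l2NormSq a) * (s ^ 2 * l2NormSq b) * ‖star ψ ⬝ᵥ prodv a b‖ ^ 2 := by
        rw [hra, hsb, one_mul, one_mul]
    _ = (r * s) ^ 2 * ‖star ψ ⬝ᵥ prodv a b‖ ^ 2 * (l2NormSq a * l2NormSq b) := by ring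
    _ ≤ lam * (l2NormSq a * l2NormSq b) :=
        mul_le_mul_of_nonneg_right hunit (mul_nonneg (l2NormSq_nonneg a) (l2NormSq_nonneg b))
    _ = lam * l2NormSq (prodv a b) := by rw [l2NormSq_prodv]

lemma re_star_dotProduct_sum_smul_vecMulVec_mulVec {ι n : Type*} [Fintype ι] [Fintype n]
    (c : ι → ℝ) (ψ : ι → n → ℂ) (v : n → ℂ) :
    (star v ⬝ᵥ ((∑ i, (c i : ℂ) • vecMulVec (ψ i) (star (ψ i))).mulVec v)).re
      = ∑ i, c i * ‖star (ψ i) ⬝ᵥ v‖ ^ 2 := by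
  simp only [sum_mulVec, smul_mulVec, vecMulVec_mulVec, op_smul_eq_smul, dotProduct_sum,
    dotProduct_smul, smul_eq_mul, Complex.re_sum]
  refine Finset.sum_congr rfl fun i _ => ?_
  rw [star_dotProduct v (ψ i)]
  rw [Complex.star_def, Complex.mul_conj, ← Complex.ofReal_mul, Complex.ofReal_re,
    Complex.sq_norm]

lemma sum_mul_l2NormSq_eq_card {ι n : Type*} [Fintype ι] [Fintype n] [DecidableEq n]
    (m : ι → ℝ) (u : ι → n → ℂ) (h : ∑ a, (m a : ℂ) • vecMulVec (u a) (star (u a)) = 1) :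
    ∑ a, m a * l2NormSq (u a) = Fintype.card n := by
  have htr := congrArg trace h
  simp only [trace_sum, trace_smul, trace_vecMulVec, trace_one, dotProduct_comm (u _),
    star_dotProduct_self_eq_l2NormSq, smul_eq_mul] at htr
  exact_mod_cast htr

lemma le_of_mem_sepFidSet {d₁ d₂ N : ℕ} {ψ : Fin N → (Fin d₁ × Fin d₂ → ℂ)} {p lam : Fin N → ℝ}
    {Λnorm : ℝ} (hp : ∀ i, 0 ≤ p i)
    (hlam : ∀ i, lam i ∈ upperBounds {x : ℝ | ∃ (a : Fin d₁ → ℂ) (b : Fin d₂ → ℂ),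
        star a ⬝ᵥ a = 1 ∧ star b ⬝ᵥ b = 1 ∧ x = (‖star (ψ i) ⬝ᵥ prodv a b‖)^2})
    (hΛ : Λnorm ∈ upperBounds {x : ℝ | ∃ v : Fin d₁ × Fin d₂ → ℂ, star v ⬝ᵥ v = 1 ∧
        x = (star v ⬝ᵥ ((∑ i, ((p i * lam i : ℝ) : ℂ) •
          Matrix.vecMulVec (ψ i) (star (ψ i))).mulVec v)).re})
    {x : ℝ} (hx : x ∈ sepFidSet N p ψ) :
    x ≤ d₁ * d₂ * Λnorm := by
  obtain ⟨A, m, χ₁, χ₂, φ, hm, hφ, hPOVM, rfl⟩ := hx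
  set χ := fun a => prodv (χ₁ a) (χ₂ a)
  have hguess (a : Fin A) : ∑ i, p i * lam i * ‖star (ψ i) ⬝ᵥ φ a‖ ^ 2 ≤ Λnorm :=
    hΛ ⟨φ a, hφ a, (re_star_dotProduct_sum_smul_vecMulVec_mulVec _ ψ (φ a)).symm⟩
  have htrace : ∑ a, m a * l2NormSq (χ a) = d₁ * d₂ := by
    simpa using sum_mul_l2NormSq_eq_card m χ hPOVM
  calc ∑ a, ∑ i, p i * m a * ‖star (ψ i) ⬝ᵥ χ a‖ ^ 2 * ‖star (ψ i) ⬝ᵥ φ a‖ ^ 2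
      ≤ ∑ a, m a * l2NormSq (χ a) * ∑ i, p i * lam i * ‖star (ψ i) ⬝ᵥ φ a‖ ^ 2 := by
        refine Finset.sum_le_sum fun a _ => ?_
        rw [Finset.mul_sum]
        refine Finset.sum_le_sum fun i _ => ?_
        calc p i * m a * ‖star (ψ i) ⬝ᵥ χ a‖ ^ 2 * ‖star (ψ i) ⬝ᵥ φ a‖ ^ 2
            = p i * m a * ‖star (ψ i) ⬝ᵥ φ a‖ ^ 2 * ‖star (ψ i) ⬝ᵥ χ a‖ ^ 2 := by ring
          _ ≤ p i * m a * ‖star (ψ i) ⬝ᵥ φ a‖ ^ 2 * (lam i * l2NormSq (χ a)) := by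
            have := hm a; have := hp i
            gcongr
            exact sq_norm_dotProduct_prodv_le (hlam i) _ _
          _ = m a * l2NormSq (χ a) * (p i * lam i * ‖star (ψ i) ⬝ᵥ φ a‖ ^ 2) := by ring
    _ ≤ ∑ a, m a * l2NormSq (χ a) * Λnorm := by
        gcongr with a
        · exact mul_nonneg (hm a).le (l2NormSq_nonneg _)
        · exact hguess a
    _ = d₁ * d₂ * Λnorm := by rw [← Finset.sum_mul, htrace]

theorem stmt6_general (d₁ d₂ N : ℕ)
    (ψ : Fin N → (Fin d₁ × Fin d₂ → ℂ))
    (p : Fin N → ℝ) (hp : ∀ i, 0 ≤ p i)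
    (lam : Fin N → ℝ)
    (hlam : ∀ i, IsGreatest {x : ℝ | ∃ (a : Fin d₁ → ℂ) (b : Fin d₂ → ℂ),
        star a ⬝ᵥ a = 1 ∧ star b ⬝ᵥ b = 1 ∧
        x = (‖star (ψ i) ⬝ᵥ prodv a b‖)^2} (lam i))
    (Λnorm : ℝ)
    (hΛ : IsGreatest {x : ℝ | ∃ v : Fin d₁ × Fin d₂ → ℂ, star v ⬝ᵥ v = 1 ∧
        x = (star v ⬝ᵥ ((∑ i, ((p i * lam i : ℝ) : ℂ) •
          Matrix.vecMulVec (ψ i) (star (ψ i))).mulVec v)).re} Λnorm) :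
    sSup (sepFidSet N p ψ) ≤ (d₁ : ℝ) * d₂ * Λnorm := by
  have hlam_nonneg (i : Fin N) : 0 ≤ lam i := by
    obtain ⟨a, b, -, -, h⟩ := (hlam i).1
    exact h ▸ sq_nonneg _
  have hΛ_nonneg : 0 ≤ Λnorm := by
    obtain ⟨v, -, rfl⟩ := hΛ.1
    rw [re_star_dotProduct_sum_smul_vecMulVec_mulVec]
    exact Finset.sum_nonneg fun i _ => by have := hp i; have := hlam_nonneg i; positivity
  exact Real.sSup_le (fun x hx => le_of_mem_sepFidSet hp (fun i => (hlam i).2) hΛ.2 hx)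
    (by positivity)

/-- Theorem 3: for an ensemble of bipartite pure states with squared largest Schmidt
coefficients `λᵢ` (characterized as the maximal squared overlap with product unit
vectors), the separable fidelity satisfies `F_S ≤ d₁ d₂ ‖Λ‖_∞` where
`Λ = ∑ᵢ pᵢ λᵢ |ψᵢ⟩⟨ψᵢ|` and `‖Λ‖_∞` is its largest eigenvalue (maximal Rayleigh
quotient). -/
theorem stmt6 (d₁ d₂ N : ℕ) (hd : d₁ ≤ d₂)
    (ψ : Fin N → (Fin d₁ × Fin d₂ → ℂ)) (hψ : ∀ i, star (ψ i) ⬝ᵥ ψ i = 1)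
    (p : Fin N → ℝ) (hp : ∀ i, 0 ≤ p i) (hpsum : ∑ i, p i = 1)
    (lam : Fin N → ℝ)
    (hlam : ∀ i, IsGreatest {x : ℝ | ∃ (a : Fin d₁ → ℂ) (b : Fin d₂ → ℂ),
        star a ⬝ᵥ a = 1 ∧ star b ⬝ᵥ b = 1 ∧
        x = (‖star (ψ i) ⬝ᵥ prodv a b‖)^2} (lam i))
    (Λnorm : ℝ)
    (hΛ : IsGreatest {x : ℝ | ∃ v : Fin d₁ × Fin d₂ → ℂ, star v ⬝ᵥ v = 1 ∧
        x = (star v ⬝ᵥ ((∑ i, ((p i * lam i : ℝ) : ℂ) •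
          Matrix.vecMulVec (ψ i) (star (ψ i))).mulVec v)).re} Λnorm) :
    sSup (sepFidSet N p ψ) ≤ (d₁ : ℝ) * d₂ * Λnorm :=
  stmt6_general d₁ d₂ N ψ p hp lam hlam Λnorm hΛ
end
end

section
/- A set of N equally likely mutually orthogonal maximally entangled states in ℂ^{d₁} ⊗ ℂ^{d₂} (d₁ ≤ d₂, Schmidt rank d₁) cannot be perfectly distinguished by separable measurements whenever N > d₂; i.e., the separable success probability satisfies P_s(S) ≤ d₂/N < 1. -/
/-!
For a maximally entangled `ψ`, Cauchy–Schwarz in the second factor together with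
`red₁ ψ = 1 / d₁` in the first gives `|⟨ψ|a ⊗ b⟩|² ≤ ‖a‖² ‖b‖² / d₁` for every product vector.
Taking the trace of the completeness relation `∑ₐ mₐ |χₐ⟩⟨χₐ| = 1` gives
`∑ₐ mₐ ‖χₐ‖² = d₁ d₂`, so the success probability is at most `(1/N) (1/d₁) d₁ d₂ = d₂ / N`.
-/

open Matrix
open scoped BigOperators ComplexOrder

noncomputable section

/-- The set of success probabilities achievable by (rank-one) separable measurements
together with decoding functions; its supremum is the separable success probability
`P_s(S)`. -/
def sepPsSet {d₁ d₂ : ℕ} (N : ℕ) (p : Fin N → ℝ)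
    (ψ : Fin N → (Fin d₁ × Fin d₂ → ℂ)) : Set ℝ :=
  {x : ℝ | ∃ (A : ℕ) (m : Fin A → ℝ) (χ₁ : Fin A → Fin d₁ → ℂ)
      (χ₂ : Fin A → Fin d₂ → ℂ) (G : Fin A → Fin N),
    (∀ a, 0 < m a) ∧
    (∑ a, (m a : ℂ) • Matrix.vecMulVec (prodv (χ₁ a) (χ₂ a))
        (star (prodv (χ₁ a) (χ₂ a))) = 1) ∧
    x = ∑ a, p (G a) * m a *
          ‖star (ψ (G a)) ⬝ᵥ prodv (χ₁ a) (χ₂ a)‖^2}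

lemma star_dotProduct_self_eq_sum_norm_sq {n : Type*} [Fintype n] (v : n → ℂ) :
    star v ⬝ᵥ v = ((∑ i, ‖v i‖ ^ 2 : ℝ) : ℂ) := by
  push_cast
  exact Finset.sum_congr rfl fun i _ => Complex.conj_mul' (v i)

lemma sum_mul_sum_norm_sq_eq_card_of_sum_smul_vecMulVec_eq_one {ι n : Type*} [Fintype ι]
    [Fintype n] [DecidableEq n] (m : ι → ℝ) (v : ι → n → ℂ)
    (h : ∑ a, (m a : ℂ) • vecMulVec (v a) (star (v a)) = 1) :
    ∑ a, m a * ∑ i, ‖v a i‖ ^ 2 = Fintype.card n := by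
  have htrace := congrArg trace h
  simp only [trace_sum, trace_smul, trace_vecMulVec, dotProduct_comm (v _),
    star_dotProduct_self_eq_sum_norm_sq, trace_one, smul_eq_mul] at htrace
  exact_mod_cast htrace

lemma sum_norm_sq_prodv {d₁ d₂ : ℕ} (a : Fin d₁ → ℂ) (b : Fin d₂ → ℂ) :
    ∑ y, ‖prodv a b y‖ ^ 2 = (∑ i, ‖a i‖ ^ 2) * ∑ j, ‖b j‖ ^ 2 := by
  simp [prodv, Fintype.sum_prod_type, mul_pow, Finset.sum_mul_sum]

lemma norm_sum_mul_sq_le {ι : Type*} [Fintype ι] (f g : ι → ℂ) :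
    ‖∑ i, f i * g i‖ ^ 2 ≤ (∑ i, ‖f i‖ ^ 2) * ∑ i, ‖g i‖ ^ 2 :=
  calc ‖∑ i, f i * g i‖ ^ 2 ≤ (∑ i, ‖f i‖ * ‖g i‖) ^ 2 := by
        gcongr
        exact (norm_sum_le _ _).trans_eq (by simp only [norm_mul])
    _ ≤ _ := Finset.sum_mul_sq_le_sq_mul_sq _ _ _

lemma sum_norm_sq_contract_eq {d₁ d₂ : ℕ} (ψ : Fin d₁ × Fin d₂ → ℂ) (a : Fin d₁ → ℂ) :
    ((∑ j, ‖∑ i, star (ψ (i, j)) * a i‖ ^ 2 : ℝ) : ℂ) = star a ⬝ᵥ (red₁ ψ *ᵥ a) := by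
  push_cast
  simp only [← Complex.mul_conj', map_sum, map_mul, Complex.conj_conj,
    dotProduct, mulVec, red₁, Finset.mul_sum, Finset.sum_mul, Pi.star_apply, Complex.star_def]
  rw [Finset.sum_comm]
  refine Finset.sum_congr rfl fun i _ => ?_
  rw [Finset.sum_comm]
  refine Finset.sum_congr rfl fun i' _ => Finset.sum_congr rfl fun j _ => by ring

lemma norm_sq_star_dotProduct_prodv_le {d₁ d₂ : ℕ} (ψ : Fin d₁ × Fin d₂ → ℂ)
    (hmax : red₁ ψ = ((d₁ : ℂ))⁻¹ • 1) (a : Fin d₁ → ℂ) (b : Fin d₂ → ℂ) :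
    ‖star ψ ⬝ᵥ prodv a b‖ ^ 2 ≤ (d₁ : ℝ)⁻¹ * ((∑ i, ‖a i‖ ^ 2) * ∑ j, ‖b j‖ ^ 2) := by
  have hcontract : ∑ j, ‖∑ i, star (ψ (i, j)) * a i‖ ^ 2 = (d₁ : ℝ)⁻¹ * ∑ i, ‖a i‖ ^ 2 := by
    apply Complex.ofReal_injective
    rw [sum_norm_sq_contract_eq, hmax, smul_mulVec, one_mulVec, dotProduct_smul,
      star_dotProduct_self_eq_sum_norm_sq, smul_eq_mul]
    push_cast
    rfl
  have hsplit : star ψ ⬝ᵥ prodv a b = ∑ j, (∑ i, star (ψ (i, j)) * a i) * b j := by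
    simp only [dotProduct, prodv, Pi.star_apply, Fintype.sum_prod_type, Finset.sum_mul]
    rw [Finset.sum_comm]
    exact Finset.sum_congr rfl fun j _ => Finset.sum_congr rfl fun i _ => by ring
  calc ‖star ψ ⬝ᵥ prodv a b‖ ^ 2
      ≤ (∑ j, ‖∑ i, star (ψ (i, j)) * a i‖ ^ 2) * ∑ j, ‖b j‖ ^ 2 := by
        rw [hsplit]; exact norm_sum_mul_sq_le _ _
    _ = (d₁ : ℝ)⁻¹ * ((∑ i, ‖a i‖ ^ 2) * ∑ j, ‖b j‖ ^ 2) := by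
        rw [hcontract, mul_assoc]

theorem stmt9_general (d₁ d₂ N : ℕ) (hd₁ : 0 < d₁) (hN : d₂ < N)
    (ψ : Fin N → (Fin d₁ × Fin d₂ → ℂ))
    (hmax : ∀ i, red₁ (ψ i) = ((d₁ : ℂ))⁻¹ • 1) :
    (∀ x ∈ sepPsSet N (fun _ => (N : ℝ)⁻¹) ψ, x ≤ (d₂ : ℝ) / N) ∧
    (d₂ : ℝ) / N < 1 := by
  have hNpos : (0 : ℝ) < N := by exact_mod_cast (Nat.zero_le d₂).trans_lt hN
  refine ⟨?_, (div_lt_one hNpos).2 (by exact_mod_cast hN)⟩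
  rintro x ⟨A, m, χ₁, χ₂, G, hm, hPOVM, rfl⟩
  have htrace := sum_mul_sum_norm_sq_eq_card_of_sum_smul_vecMulVec_eq_one m _ hPOVM
  simp only [sum_norm_sq_prodv, Fintype.card_prod, Fintype.card_fin, Nat.cast_mul] at htrace
  calc ∑ a, (N : ℝ)⁻¹ * m a * ‖star (ψ (G a)) ⬝ᵥ prodv (χ₁ a) (χ₂ a)‖ ^ 2
      ≤ ∑ a, (N : ℝ)⁻¹ * m a *
          ((d₁ : ℝ)⁻¹ * ((∑ i, ‖χ₁ a i‖ ^ 2) * ∑ j, ‖χ₂ a j‖ ^ 2)) := by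
        gcongr with a
        · exact mul_nonneg (by positivity) (hm a).le
        · exact norm_sq_star_dotProduct_prodv_le _ (hmax (G a)) _ _
    _ = (N : ℝ)⁻¹ * (d₁ : ℝ)⁻¹ * ∑ a, m a * ((∑ i, ‖χ₁ a i‖ ^ 2) * ∑ j, ‖χ₂ a j‖ ^ 2) := by
        rw [Finset.mul_sum]
        exact Finset.sum_congr rfl fun a _ => by ring
    _ = (d₂ : ℝ) / N := by
        rw [htrace]
        field_simp

/-- A set of `N > d₂` equally likely mutually orthogonal maximally entangled states in
`ℂ^{d₁} ⊗ ℂ^{d₂}` (`d₁ ≤ d₂`) cannot be perfectly distinguished by separable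
measurements: every separable success probability is at most `d₂/N < 1`. -/
theorem stmt9 (d₁ d₂ N : ℕ) (hd₁ : 0 < d₁) (hd : d₁ ≤ d₂) (hN : d₂ < N)
    (ψ : Fin N → (Fin d₁ × Fin d₂ → ℂ))
    (hortho : ∀ i j, star (ψ i) ⬝ᵥ ψ j = if i = j then 1 else 0)
    (hmax : ∀ i, red₁ (ψ i) = ((d₁ : ℂ))⁻¹ • 1) :
    (∀ x ∈ sepPsSet N (fun _ => (N : ℝ)⁻¹) ψ, x ≤ (d₂ : ℝ) / N) ∧
    (d₂ : ℝ) / N < 1 :=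
  stmt9_general d₁ d₂ N hd₁ hN ψ hmax
end
end

section
/- Let {(p_i, |ψ_i⟩)} be an ensemble of pure states whose linear span has dimension r. Then for any POVM M = {m_a|χ_a⟩⟨χ_a|} and guessing strategy G: a ↦ |K_a⟩, the average fidelity F(M,G) = Σ_{a,i} p_i m_a |⟨ψ_i|χ_a⟩|² |⟨ψ_i|K_a⟩|² is at most the Ky Fan r-norm ‖ρ'‖_r^{KF} (the sum of the r largest eigenvalues) of ρ' = Σ_i p_i |ψ_i⟩⟨ψ_i| ⊗ |ψ_i⟩⟨ψ_i|. -/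
/-!
Let `Q` be the orthogonal projection onto `span {ψᵢ}`, so `Tr Q = r`. The POVM and the guesses
combine into `Y = ∑ₐ mₐ |χₐ⟩⟨χₐ| ⊗ |Kₐ⟩⟨Kₐ|`, and `0 ≤ Y ≤ 1` because `∑ₐ mₐ |χₐ⟩⟨χₐ| = 1` and
every `|Kₐ⟩⟨Kₐ|` is a projection. The compression `M̃ = (Q ⊗ 1) Y (Q ⊗ 1)` still lies between `0`
and `1`, its trace is `Tr (Q ∑ₐ mₐ |χₐ⟩⟨χₐ|) = Tr Q = r`, and since `Q ⊗ 1` fixes `ρ'` on both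
sides, `Tr (ρ' M̃) = Tr (ρ' Y)`, which is the average fidelity. So the fidelity is one of the
values `Tr (ρ' X)` whose maximum is the Ky Fan norm.
-/

open Matrix Kronecker
open scoped ComplexOrder MatrixOrder

theorem IsStarProjection.mul_mul_le_one {R : Type*} [Ring R] [PartialOrder R] [StarRing R]
    [StarOrderedRing R] {q y : R} (hq : IsStarProjection q) (hy : y ≤ 1) : q * y * q ≤ 1 :=
  calc q * y * q ≤ q * 1 * q := hq.isSelfAdjoint.conjugate_le_conjugate hy
    _ = q := by rw [mul_one, hq.isIdempotentElem.eq]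
    _ ≤ 1 := hq.le_one

namespace Matrix

variable {𝕜 ι l n : Type*} [RCLike 𝕜] [Fintype l] [Fintype n]

theorem exists_isStarProjection_trace_eq_finrank [DecidableEq n] (S : Submodule 𝕜 (n → 𝕜)) :
    ∃ Q : Matrix n n 𝕜, IsStarProjection Q ∧ Q.trace = Module.finrank 𝕜 S ∧
      ∀ v ∈ S, Q *ᵥ v = v := by
  let e : EuclideanSpace 𝕜 n ≃ₗ[𝕜] (n → 𝕜) := WithLp.linearEquiv 2 𝕜 (n → 𝕜)
  let S' := S.map (e.symm : (n → 𝕜) →ₗ[𝕜] EuclideanSpace 𝕜 n)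
  let toMatrix := (toEuclideanCLM (n := n) (𝕜 := 𝕜)).symm
  refine ⟨toMatrix S'.starProjection, isStarProjection_starProjection.map toMatrix, ?_,
    fun v hv => ?_⟩
  · have hproj : LinearMap.IsProj S' (S'.starProjection : EuclideanSpace 𝕜 n →ₗ[𝕜] _) :=
      ⟨S'.starProjection_apply_mem, fun x hx => S'.starProjection_eq_self_iff.mpr hx⟩
    rw [← LinearEquiv.finrank_map_eq e.symm, ← hproj.trace,
      LinearMap.trace_eq_matrix_trace 𝕜 (EuclideanSpace.basisFun n 𝕜).toBasis]
    rfl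
  · apply WithLp.toLp_injective 2
    rw [← toEuclideanCLM_toLp, StarAlgEquiv.apply_symm_apply]
    exact S'.starProjection_eq_self_iff.mpr (Submodule.mem_map_of_mem hv)

theorem isStarProjection_vecMulVec_star {u : n → 𝕜} (hu : star u ⬝ᵥ u = 1) :
    IsStarProjection (vecMulVec u (star u)) where
  isIdempotentElem := by
    rw [IsIdempotentElem, vecMulVec_mul_vecMulVec, hu, one_smul]
  isSelfAdjoint := (posSemidef_vecMulVec_self_star u).isHermitian

theorem _root_.IsStarProjection.kronecker {R : Type*} [CommSemiring R] [StarRing R]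
    {P : Matrix l l R} {Q : Matrix n n R}
    (hP : IsStarProjection P) (hQ : IsStarProjection Q) : IsStarProjection (P ⊗ₖ Q) where
  isIdempotentElem := by
    rw [IsIdempotentElem, ← mul_kronecker_mul, hP.isIdempotentElem.eq, hQ.isIdempotentElem.eq]
  isSelfAdjoint := by
    rw [IsSelfAdjoint, star_eq_conjTranspose, conjTranspose_kronecker,
      ← star_eq_conjTranspose, ← star_eq_conjTranspose, hP.isSelfAdjoint.star_eq,
      hQ.isSelfAdjoint.star_eq]

theorem _root_.IsStarProjection.mul_vecMulVec_star_mul {Q : Matrix n n 𝕜}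
    (hQ : IsStarProjection Q) {u : n → 𝕜} (hu : Q *ᵥ u = u) :
    Q * vecMulVec u (star u) * Q = vecMulVec u (star u) := by
  have hstar : star u ᵥ* Q = star u := by
    rw [← hQ.isSelfAdjoint.star_eq, star_eq_conjTranspose, ← star_mulVec, hu]
  rw [mul_vecMulVec, vecMulVec_mul, hu, hstar]

variable [Fintype ι]

theorem sum_kronecker_nonneg {A : ι → Matrix l l 𝕜} {B : ι → Matrix n n 𝕜}
    (hA : ∀ a, 0 ≤ A a) (hB : ∀ a, 0 ≤ B a) : 0 ≤ ∑ a, A a ⊗ₖ B a :=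
  nonneg_iff_posSemidef.mpr <| posSemidef_sum _ fun a _ =>
    (nonneg_iff_posSemidef.mp (hA a)).kronecker (nonneg_iff_posSemidef.mp (hB a))

theorem sum_kronecker_le_one [DecidableEq l] [DecidableEq n] {A : ι → Matrix l l 𝕜}
    {B : ι → Matrix n n 𝕜} (hA : ∀ a, 0 ≤ A a) (hA_sum : ∑ a, A a = 1) (hB : ∀ a, B a ≤ 1) :
    ∑ a, A a ⊗ₖ B a ≤ 1 := by
  have hsplit : 1 - ∑ a, A a ⊗ₖ B a = ∑ a, A a ⊗ₖ (1 - B a) := by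
    rw [← one_kronecker_one, ← hA_sum]
    ext ⟨i, j⟩ ⟨k, s⟩
    simp [sum_apply, Finset.sum_mul, mul_sub]
  rw [le_iff, hsplit]
  exact posSemidef_sum _ fun a _ =>
    (nonneg_iff_posSemidef.mp (hA a)).kronecker (le_iff.mp (hB a))

theorem trace_kronecker_one_mul_sum_kronecker [DecidableEq n] (Q : Matrix l l 𝕜)
    {A : ι → Matrix l l 𝕜} {B : ι → Matrix n n 𝕜} (hB : ∀ a, (B a).trace = 1) :
    ((Q ⊗ₖ 1) * ∑ a, A a ⊗ₖ B a).trace = (Q * ∑ a, A a).trace := by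
  simp only [Finset.mul_sum, ← mul_kronecker_mul, one_mul, trace_sum, trace_kronecker, hB,
    mul_one]

theorem trace_vecMulVec_star_mul_vecMulVec_star (u v : n → 𝕜) :
    (vecMulVec u (star u) * vecMulVec v (star v)).trace = ((‖star u ⬝ᵥ v‖ ^ 2 : ℝ) : 𝕜) := by
  rw [vecMulVec_mul_vecMulVec, trace_vecMulVec, dotProduct_smul, smul_eq_mul, RCLike.ofReal_pow,
    ← RCLike.mul_conj, dotProduct_star, dotProduct_comm, RCLike.star_def]

theorem _root_.IsStarProjection.kronecker_one_mul_sum_mul_kronecker_one_eq_self [DecidableEq l]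
    {Q : Matrix n n 𝕜} (hQ : IsStarProjection Q) {ψ : ι → n → 𝕜} (hψ : ∀ i, Q *ᵥ ψ i = ψ i)
    (c : ι → 𝕜) (B : ι → Matrix l l 𝕜) :
    (Q ⊗ₖ 1) * (∑ i, c i • (vecMulVec (ψ i) (star (ψ i)) ⊗ₖ B i)) * (Q ⊗ₖ 1) =
      ∑ i, c i • (vecMulVec (ψ i) (star (ψ i)) ⊗ₖ B i) := by
  simp only [Finset.mul_sum, Finset.sum_mul, mul_smul_comm, smul_mul_assoc, ← mul_kronecker_mul,
    one_mul, mul_one, hQ.mul_vecMulVec_star_mul (hψ _)]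

theorem trace_sum_kronecker_mul_sum_kronecker {κ : Type*} [Fintype κ] (p : ι → ℝ)
    (ψ : ι → n → ℂ) (m : κ → ℝ) (χ K : κ → n → ℂ) :
    ((∑ i, (p i : ℂ) • (vecMulVec (ψ i) (star (ψ i)) ⊗ₖ vecMulVec (ψ i) (star (ψ i)))) *
      ∑ a, ((m a : ℂ) • vecMulVec (χ a) (star (χ a))) ⊗ₖ vecMulVec (K a) (star (K a))).trace =
    ((∑ a, ∑ i, p i * m a * ‖star (ψ i) ⬝ᵥ χ a‖ ^ 2 * ‖star (ψ i) ⬝ᵥ K a‖ ^ 2 : ℝ) : ℂ) := by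
  simp only [Finset.sum_mul_sum, trace_sum, smul_mul_assoc, mul_smul_comm, smul_kronecker,
    ← mul_kronecker_mul, trace_smul, trace_kronecker, trace_vecMulVec_star_mul_vecMulVec_star,
    RCLike.ofReal_eq_complex_ofReal]
  rw [Finset.sum_comm]
  push_cast
  exact Finset.sum_congr rfl fun a _ => Finset.sum_congr rfl fun i _ => by ring

end Matrix

theorem stmt16_general (n N A : ℕ)
    (ψ : Fin N → (Fin n → ℂ))
    (p : Fin N → ℝ)
    (r : ℕ) (hr : Module.finrank ℂ (Submodule.span ℂ (Set.range ψ)) = r)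
    (KF : ℝ)
    (hKF : IsGreatest {x : ℝ | ∃ X : Matrix ((Fin n) × (Fin n)) ((Fin n) × (Fin n)) ℂ,
        X.PosSemidef ∧ (1 - X).PosSemidef ∧ X.trace = (r : ℂ) ∧
        x = (((∑ i, ((p i : ℝ) : ℂ) •
            ((Matrix.vecMulVec (ψ i) (star (ψ i))) ⊗ₖ
              (Matrix.vecMulVec (ψ i) (star (ψ i))))) * X).trace).re} KF)
    (m : Fin A → ℝ) (hm : ∀ a, 0 ≤ m a)
    (χ : Fin A → (Fin n → ℂ))
    (hpovm : ∑ a, (m a : ℂ) • Matrix.vecMulVec (χ a) (star (χ a)) = 1)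
    (K : Fin A → (Fin n → ℂ)) (hK : ∀ a, star (K a) ⬝ᵥ K a = 1) :
    ∑ a, ∑ i, p i * m a * ‖star (ψ i) ⬝ᵥ χ a‖^2 *
        ‖star (ψ i) ⬝ᵥ K a‖^2 ≤ KF := by
  obtain ⟨Q, hQ, hQ_trace, hQψ⟩ :=
    exists_isStarProjection_trace_eq_finrank (Submodule.span ℂ (Set.range ψ))
  have hQ₂ : IsStarProjection (Q ⊗ₖ (1 : Matrix (Fin n) (Fin n) ℂ)) :=
    hQ.kronecker (IsStarProjection.one _)
  have hA : ∀ a, 0 ≤ (m a : ℂ) • vecMulVec (χ a) (star (χ a)) := fun a =>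
    nonneg_iff_posSemidef.mpr ((posSemidef_vecMulVec_self_star _).smul (by exact_mod_cast hm a))
  have hKproj : ∀ a, IsStarProjection (vecMulVec (K a) (star (K a))) := fun a =>
    isStarProjection_vecMulVec_star (hK a)
  set Y := ∑ a, ((m a : ℂ) • vecMulVec (χ a) (star (χ a))) ⊗ₖ vecMulVec (K a) (star (K a))
  have hY : 0 ≤ Y := sum_kronecker_nonneg hA fun a => (hKproj a).nonneg
  refine hKF.2 ⟨(Q ⊗ₖ 1) * Y * (Q ⊗ₖ 1), ?_, ?_, ?_, ?_⟩
  · exact nonneg_iff_posSemidef.mp (hQ₂.isSelfAdjoint.conjugate_nonneg hY)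
  · exact hQ₂.mul_mul_le_one (sum_kronecker_le_one hA hpovm fun a => (hKproj a).le_one)
  · rw [trace_mul_cycle, hQ₂.isIdempotentElem.eq,
      trace_kronecker_one_mul_sum_kronecker _ fun a => ?_, hpovm, mul_one, hQ_trace, hr]
    rw [trace_vecMulVec, dotProduct_comm, hK]
  · have hρ := hQ.kronecker_one_mul_sum_mul_kronecker_one_eq_self
      (fun i => hQψ _ (Submodule.subset_span ⟨i, rfl⟩)) (fun i => (p i : ℂ))
      (fun i => vecMulVec (ψ i) (star (ψ i)))
    rw [← mul_assoc, trace_mul_cycle, ← mul_assoc, hρ, trace_sum_kronecker_mul_sum_kronecker,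
      Complex.ofReal_re]

/-- Lemma 3: if the ensemble `{(pᵢ, ψᵢ)}` spans an `r`-dimensional subspace, then for
any rank-one POVM `{mₐ|χₐ⟩⟨χₐ|}` and guessing strategy `a ↦ |Kₐ⟩`, the average
fidelity is at most the Ky Fan `r`-norm of `ρ' = ∑ᵢ pᵢ |ψᵢ⟩⟨ψᵢ| ⊗ |ψᵢ⟩⟨ψᵢ|`
(the sum of its `r` largest eigenvalues, characterized as the maximum of
`Tr(ρ'X)` over `0 ≤ X ≤ I` with `Tr X = r`). -/
theorem stmt16 (n N A : ℕ)
    (ψ : Fin N → (Fin n → ℂ)) (hψ : ∀ i, star (ψ i) ⬝ᵥ ψ i = 1)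
    (p : Fin N → ℝ) (hp : ∀ i, 0 ≤ p i) (hpsum : ∑ i, p i = 1)
    (r : ℕ) (hr : Module.finrank ℂ (Submodule.span ℂ (Set.range ψ)) = r)
    (KF : ℝ)
    (hKF : IsGreatest {x : ℝ | ∃ X : Matrix ((Fin n) × (Fin n)) ((Fin n) × (Fin n)) ℂ,
        X.PosSemidef ∧ (1 - X).PosSemidef ∧ X.trace = (r : ℂ) ∧
        x = (((∑ i, ((p i : ℝ) : ℂ) •
            ((Matrix.vecMulVec (ψ i) (star (ψ i))) ⊗ₖ
              (Matrix.vecMulVec (ψ i) (star (ψ i))))) * X).trace).re} KF)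
    (m : Fin A → ℝ) (hm : ∀ a, 0 ≤ m a)
    (χ : Fin A → (Fin n → ℂ)) (hχ : ∀ a, star (χ a) ⬝ᵥ χ a = 1)
    (hpovm : ∑ a, (m a : ℂ) • Matrix.vecMulVec (χ a) (star (χ a)) = 1)
    (K : Fin A → (Fin n → ℂ)) (hK : ∀ a, star (K a) ⬝ᵥ K a = 1) :
    ∑ a, ∑ i, p i * m a * ‖star (ψ i) ⬝ᵥ χ a‖^2 *
        ‖star (ψ i) ⬝ᵥ K a‖^2 ≤ KF :=
  stmt16_general n N A ψ p r hr KF hKF m hm χ hpovm K hK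
end

section
/- For the equally likely ensemble S₂ = {|00⟩, |11⟩, (|00⟩+|11⟩)/√2, (|00⟩−|11⟩)/√2} in ℂ²⊗ℂ², the optimal average fidelity over all measurements equals 3/4, and it is attained by the local computational-basis measurement. -/
/-!
Every state of `S₂` lies in the span of `|00⟩, |11⟩`, so the contribution of a POVM element `N`
with guess `φ` involves only the entries `p = N₀₀,₀₀`, `q = N₁₁,₁₁`, the cross term
`Re (N₀₀,₁₁ + N₁₁,₀₀)` and the amplitudes of `φ` on `|00⟩, |11⟩`. Positivity of `N` bounds the
cross term by `p ‖φ₁₁‖² + q ‖φ₀₀‖²`, which caps each contribution at `3/8 (p + q)`; over a POVM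
the `p`'s and the `q`'s each sum to `1`, giving `3/4`. Measuring in the computational basis and
guessing the outcome attains this.
-/

open Matrix
open scoped BigOperators ComplexOrder

noncomputable section

/-- The ensemble `S₂ = {|00⟩, |11⟩, (|00⟩+|11⟩)/√2, (|00⟩−|11⟩)/√2}` in `ℂ²⊗ℂ²`. -/
def S₂ : Fin 4 → (Fin 2 × Fin 2 → ℂ) :=
  ![fun y => if y = (0, 0) then 1 else 0,
    fun y => if y = (1, 1) then 1 else 0,
    fun y => if y = (0, 0) then ((Real.sqrt 2)⁻¹ : ℂ)
             else if y = (1, 1) then ((Real.sqrt 2)⁻¹ : ℂ) else 0,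
    fun y => if y = (0, 0) then ((Real.sqrt 2)⁻¹ : ℂ)
             else if y = (1, 1) then -((Real.sqrt 2)⁻¹ : ℂ) else 0]

namespace Matrix

namespace PosSemidef

variable {ι : Type*} {N : Matrix ι ι ℂ}

theorem re_diag_nonneg (hN : N.PosSemidef) (u : ι) : 0 ≤ (N u u).re :=
  (Complex.nonneg_iff.mp hN.diag_nonneg).1

-- Nonnegativity of the quadratic form of the principal `2 × 2` block on `(w, -z)` and `(w̄, -z̄)`.
theorem re_add_mul_re_le_normSq (hN : N.PosSemidef) (u v : ι) (z w : ℂ) :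
    (N u v + N v u).re * (z * starRingEnd ℂ w).re ≤
      Complex.normSq w * (N u u).re + Complex.normSq z * (N v v).re := by
  have hP := hN.submatrix ![u, v]
  have h₁ := (Complex.nonneg_iff.mp (hP.dotProduct_mulVec_nonneg ![w, -z])).1
  have h₂ := (Complex.nonneg_iff.mp
    (hP.dotProduct_mulVec_nonneg ![starRingEnd ℂ w, -starRingEnd ℂ z])).1
  simp only [dotProduct, mulVec, Fin.sum_univ_two, submatrix_apply, Pi.star_apply,
    Matrix.cons_val_zero, Matrix.cons_val_one, Complex.add_re, Complex.mul_re,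
    Complex.star_def, Complex.conj_re, Complex.conj_im, Complex.neg_re, Complex.neg_im,
    Complex.mul_im, Complex.add_im, Complex.normSq_apply] at h₁ h₂ ⊢
  nlinarith

end PosSemidef

theorem sum_re_apply_self_of_sum_eq_one {α ι : Type*} [Fintype α] [DecidableEq ι]
    {M : α → Matrix ι ι ℂ} (hM : ∑ a, M a = 1) (u : ι) : ∑ a, (M a u u).re = 1 := by
  simpa [Complex.re_sum, Matrix.sum_apply] using congrArg (fun P => (P u u).re) hM

theorem re_star_dotProduct_single_mulVec {ι : Type*} [Fintype ι] [DecidableEq ι]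
    (x : ι → ℂ) (a : ι) : (star x ⬝ᵥ single a a 1 *ᵥ x).re = ‖x a‖ ^ 2 := by
  simp [single_mulVec_eq, Complex.sq_norm, Complex.normSq_apply, mul_comm]

theorem posSemidef_single_self_one {ι : Type*} [DecidableEq ι] (a : ι) :
    (single a a (1 : ℂ)).PosSemidef := by
  rw [← diagonal_single]
  exact PosSemidef.diagonal (Pi.single_nonneg.mpr zero_le_one)

end Matrix

theorem Complex.normSq_add_normSq_le_one {ι : Type*} [Fintype ι] {φ : ι → ℂ}
    (hφ : star φ ⬝ᵥ φ = 1) {u v : ι} (huv : u ≠ v) :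
    Complex.normSq (φ u) + Complex.normSq (φ v) ≤ 1 := by
  have hsum : ∑ i, Complex.normSq (φ i) = 1 := by
    have := congrArg Complex.re hφ
    simpa [dotProduct, Complex.re_sum, Complex.normSq_apply, mul_comm] using this
  classical
  rw [← hsum, ← Finset.sum_pair (f := fun i => Complex.normSq (φ i)) huv]
  exact Finset.sum_le_univ_sum_of_nonneg fun i => Complex.normSq_nonneg _

theorem S₂_fidelity_eq (N : Matrix (Fin 2 × Fin 2) (Fin 2 × Fin 2) ℂ) (φ : Fin 2 × Fin 2 → ℂ) :
    ∑ i, (4 : ℝ)⁻¹ * (star (S₂ i) ⬝ᵥ N *ᵥ S₂ i).re * ‖star (S₂ i) ⬝ᵥ φ‖ ^ 2 =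
      4⁻¹ * ((N (0, 0) (0, 0)).re * Complex.normSq (φ (0, 0))
        + (N (1, 1) (1, 1)).re * Complex.normSq (φ (1, 1))
        + ((N (0, 0) (0, 0)).re + (N (1, 1) (1, 1)).re) *
            (Complex.normSq (φ (0, 0)) + Complex.normSq (φ (1, 1))) / 2
        + (N (0, 0) (1, 1) + N (1, 1) (0, 0)).re *
            (φ (0, 0) * starRingEnd ℂ (φ (1, 1))).re) := by
  have hsqrt : Real.sqrt 2 ^ 2 = 2 := Real.sq_sqrt zero_le_two
  simp only [Fin.sum_univ_four, S₂, Matrix.cons_val_zero, Matrix.cons_val_one,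
    Matrix.cons_val_two, Matrix.cons_val_three, Matrix.head_cons, Matrix.tail_cons,
    dotProduct, mulVec, Pi.star_apply, Fintype.sum_prod_type, Fin.sum_univ_two,
    Complex.sq_norm]
  norm_num [Prod.ext_iff]
  simp only [← Complex.ofReal_inv, Complex.normSq_apply, Complex.add_re, Complex.add_im,
    Complex.mul_re, Complex.mul_im, Complex.ofReal_re, Complex.ofReal_im, Complex.neg_re,
    Complex.neg_im]
  ring_nf
  simp only [inv_pow, hsqrt]
  ring

theorem S₂_fidelity_le {N : Matrix (Fin 2 × Fin 2) (Fin 2 × Fin 2) ℂ} (hN : N.PosSemidef)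
    {φ : Fin 2 × Fin 2 → ℂ} (hφ : star φ ⬝ᵥ φ = 1) :
    ∑ i, (4 : ℝ)⁻¹ * (star (S₂ i) ⬝ᵥ N *ᵥ S₂ i).re * ‖star (S₂ i) ⬝ᵥ φ‖ ^ 2 ≤
      3 / 8 * ((N (0, 0) (0, 0)).re + (N (1, 1) (1, 1)).re) := by
  rw [S₂_fidelity_eq]
  have hcross := hN.re_add_mul_re_le_normSq (0, 0) (1, 1) (φ (0, 0)) (φ (1, 1))
  have hweight := Complex.normSq_add_normSq_le_one hφ (u := (0, 0)) (v := (1, 1)) (by decide)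
  have hp := hN.re_diag_nonneg (0, 0)
  have hq := hN.re_diag_nonneg (1, 1)
  nlinarith [Complex.normSq_nonneg (φ (0, 0)), Complex.normSq_nonneg (φ (1, 1))]

theorem S₂_computational_basis_fidelity :
    ∑ a : Fin 2 × Fin 2, ∑ i : Fin 4,
      (4 : ℝ)⁻¹ * ‖S₂ i a‖ ^ 2 * ‖star (S₂ i) ⬝ᵥ Pi.single a 1‖ ^ 2 = 3 / 4 := by
  have hsqrt : Real.sqrt 2 ^ 2 = 2 := Real.sq_sqrt zero_le_two
  simp only [dotProduct_single_one, Pi.star_apply, norm_star, Fintype.sum_prod_type,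
    Fin.sum_univ_two, Fin.sum_univ_four, S₂, Matrix.cons_val_zero, Matrix.cons_val_one,
    Matrix.cons_val_two, Matrix.cons_val_three, Matrix.head_cons, Matrix.tail_cons]
  norm_num [Prod.ext_iff, hsqrt]

/-- For the equally likely ensemble `S₂`, the optimal average fidelity over all
measurements and guessing strategies equals `3/4`, and it is attained by the local
computational-basis measurement (with a suitable guessing strategy). -/
theorem stmt18 :
    IsGreatest {x : ℝ | ∃ (A : ℕ) (M : Fin A → Matrix (Fin 2 × Fin 2) (Fin 2 × Fin 2) ℂ)
        (φ : Fin A → (Fin 2 × Fin 2 → ℂ)),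
      (∀ a, (M a).PosSemidef) ∧ (∑ a, M a = 1) ∧ (∀ a, star (φ a) ⬝ᵥ φ a = 1) ∧
      x = ∑ a, ∑ i, (4 : ℝ)⁻¹ * (star (S₂ i) ⬝ᵥ (M a).mulVec (S₂ i)).re *
            ‖star (S₂ i) ⬝ᵥ φ a‖^2} (3 / 4) ∧
    (∃ φ : Fin 2 × Fin 2 → (Fin 2 × Fin 2 → ℂ), (∀ a, star (φ a) ⬝ᵥ φ a = 1) ∧
      ∑ a : Fin 2 × Fin 2, ∑ i : Fin 4,
          (4 : ℝ)⁻¹ * ‖S₂ i a‖^2 *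
            ‖star (S₂ i) ⬝ᵥ φ a‖^2 = 3 / 4) := by
  have hunit (a : Fin 2 × Fin 2) :
      star (Pi.single a 1 : Fin 2 × Fin 2 → ℂ) ⬝ᵥ Pi.single a 1 = 1 := by
    simp
  refine ⟨⟨?_, ?_⟩, ⟨fun a => Pi.single a 1, hunit, S₂_computational_basis_fidelity⟩⟩
  · let e : Fin (2 * 2) ≃ Fin 2 × Fin 2 := finProdFinEquiv.symm
    refine ⟨2 * 2, fun k => single (e k) (e k) 1, fun k => Pi.single (e k) 1,
      fun k => posSemidef_single_self_one (e k), ?_, fun k => hunit (e k), ?_⟩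
    · rw [e.sum_comp (fun a => single a a (1 : ℂ)), sum_single_one]
    · simp only [re_star_dotProduct_single_mulVec]
      rw [e.sum_comp fun a =>
          ∑ i, (4 : ℝ)⁻¹ * ‖S₂ i a‖ ^ 2 * ‖star (S₂ i) ⬝ᵥ Pi.single a 1‖ ^ 2]
      exact S₂_computational_basis_fidelity.symm
  · rintro x ⟨A, M, φ, hM, hsum, hφ, rfl⟩
    calc ∑ a, ∑ i, (4 : ℝ)⁻¹ * (star (S₂ i) ⬝ᵥ M a *ᵥ S₂ i).re * ‖star (S₂ i) ⬝ᵥ φ a‖ ^ 2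
        ≤ ∑ a, 3 / 8 * ((M a (0, 0) (0, 0)).re + (M a (1, 1) (1, 1)).re) :=
          Finset.sum_le_sum fun a _ => S₂_fidelity_le (hM a) (hφ a)
      _ = 3 / 4 := by
          rw [← Finset.mul_sum, Finset.sum_add_distrib, sum_re_apply_self_of_sum_eq_one hsum,
            sum_re_apply_self_of_sum_eq_one hsum]
          norm_num
end
end
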